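/- arXiv:1304.0201 — 2 statements merged into one kernel-verified Lean document; each statement's English description precedes it below -/
import Mathlib

section
/- Let $F$ be an ordered field with canonical valuation $v$. If a cut $C$ in $F$ is the upper edge $B^+$ of a ball $B$ in $F$, then $B$ is uniquely determined by $C$; likewise for lower edges $B^-$. Moreover, it is impossible that $B_1^+ = B_2^-$ for two balls $B_1, B_2$ in $F$. -/
open Set

section Cuts
variable {α : Type*} [LinearOrder α]

/-- Cuts `(D, E)` in a linear order `α` are identified with their left parts `D`,
which are exactly the lower sets of `α` (with `E = α \ D`); they are ordered by
inclusion of left parts.  This order is linear. -/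
instance : IsTotal (LowerSet α) (· ≤ ·) := by
  constructor
  intro s t
  by_cases h : (s : Set α) ⊆ (t : Set α)
  · exact Or.inl h
  · refine Or.inr fun x hx => ?_
    obtain ⟨a, ha, hat⟩ := not_subset.mp h
    by_cases hxa : x ≤ a
    · exact s.lower hxa ha
    · exact absurd (t.lower (le_of_not_ge hxa) hx) hat

noncomputable instance : LinearOrder (LowerSet α) :=
  letI := Classical.decEq (LowerSet α)
  letI : DecidableRel ((· ≤ ·) : LowerSet α → LowerSet α → Prop) :=
    fun _ _ => Classical.propDecidable _
  letI : DecidableRel ((· < ·) : LowerSet α → LowerSet α → Prop) :=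
    fun _ _ => Classical.propDecidable _
  Lattice.toLinearOrder _

/-- The interval (order) topology on the set of cuts. -/
instance : TopologicalSpace (LowerSet α) := Preorder.topology _
instance : OrderTopology (LowerSet α) := ⟨rfl⟩

/-- The principal cut `a⁺`, with left part `{x | x ≤ a}`. -/
def upCut (a : α) : LowerSet α := ⟨{x | x ≤ a}, fun _ _ hba ha => le_trans hba ha⟩

/-- The principal cut `a⁻`, with left part `{x | x < a}`. -/
def lowCut (a : α) : LowerSet α := ⟨{x | x < a}, fun _ _ hba ha => lt_of_le_of_lt hba ha⟩

/-- The upper edge `A⁺` of a set `A`: the cut whose left part is the smallest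
initial segment containing `A`. -/
def upperEdge (A : Set α) : LowerSet α :=
  ⟨{x | ∃ a ∈ A, x ≤ a}, fun _ _ hba ⟨c, hc, hac⟩ => ⟨c, hc, hba.trans hac⟩⟩

/-- The lower edge `A⁻` of a set `A`: the cut whose right part is the smallest
final segment containing `A` (given here by its left part). -/
def lowerEdge (A : Set α) : LowerSet α :=
  ⟨{x | ∀ a ∈ A, x < a}, fun _ _ hba ha c hc => lt_of_le_of_lt hba (ha c hc)⟩

end Cuts

section Val
variable {F : Type*} [Field F] [LinearOrder F] [IsStrictOrderedRing F]

/-- `vle a b` encodes `v a ≤ v b` for the canonical (natural) valuation `v` of the ordered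
field `F` (whose valuation ring is the convex hull of `ℤ`): the valuation of `a` is at most
that of `b` iff `|b|` is bounded by an integer multiple of `|a|`.  (`v 0 = ∞` is the largest
value.) -/
def vle (a b : F) : Prop := ∃ n : ℕ, |b| ≤ (n : F) * |a|

/-- `veq a b` encodes `v a = v b`. -/
def veq (a b : F) : Prop := vle a b ∧ vle b a

/-- `vlt a b` encodes `v a < v b`. -/
def vlt (a b : F) : Prop := vle a b ∧ ¬ vle b a

/-- A subset `S ⊆ F` encoding a final segment `S'` of the value group `vF` together with `∞`:
`S = {x | v x ∈ S' ∪ {∞}}`.  Equivalently: `0 ∈ S` and `S` is closed under increasing the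
valuation. -/
def IsValFinalSegment (S : Set F) : Prop :=
  (0 : F) ∈ S ∧ ∀ x ∈ S, ∀ y : F, vle x y → y ∈ S

/-- The ball `B_S(a,F) = {b | v(a-b) ∈ S ∪ {∞}}`, where the final segment `S ∪ {∞}` of
`vF ∪ {∞}` is encoded as a subset of `F` as in `IsValFinalSegment`. -/
def vball (S : Set F) (a : F) : Set F := {b | a - b ∈ S}

/-- A ball in `F` with respect to the canonical valuation. -/
def IsBall (B : Set F) : Prop := ∃ (a : F) (S : Set F), IsValFinalSegment S ∧ B = vball S a

end Val

/-!
A ball `B` with centre `a` is `a + S`, where `S` is closed under subtraction and contains every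
`y` with `|y| ≤ n |x|` for some `x ∈ S` and `n : ℕ`; so for `b, c ∈ B` the ball contains every
`x` with `|x - b| ≤ 2 |c - b|`. If two balls share a point `c` and `B₁⁺ ≤ B₂⁺`, reflect `x ∈ B₁`
to `c + |x - c| ∈ B₁`; some point of `B₂` lies above it, so `|x - c|` is at most a distance
realised in `B₂` and `x ∈ B₂`. Balls with equal upper edges do share a point (the larger of
their centres), and lower edges reduce to upper edges under `x ↦ -x`. Finally, if `B₁⁺ = B₂⁻`
then every point of `B₁` lies below every point of `B₂`, in particular the centres satisfy
`a₁ < a₂`; their midpoint is either below a point of `B₁`, forcing `a₂ ∈ B₁`, or above a point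
of `B₂`, forcing `a₁ ∈ B₂`, and either way some point lies strictly below itself.
-/

open scoped Pointwise

section Edges
variable {α : Type*} [LinearOrder α]

@[simp]
lemma mem_upperEdge {A : Set α} {x : α} : x ∈ upperEdge A ↔ ∃ a ∈ A, x ≤ a := Iff.rfl

@[simp]
lemma mem_lowerEdge {A : Set α} {x : α} : x ∈ lowerEdge A ↔ ∀ a ∈ A, x < a := Iff.rfl

lemma mem_upperEdge_of_mem {A : Set α} {a : α} (ha : a ∈ A) : a ∈ upperEdge A :=
  ⟨a, ha, le_rfl⟩

end Edges

section NegEdges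
variable {G : Type*} [AddCommGroup G] [LinearOrder G] [IsOrderedAddMonoid G]

lemma mem_upperEdge_neg {A : Set G} {x : G} : x ∈ upperEdge (-A) ↔ -x ∉ lowerEdge A := by
  simp only [mem_upperEdge, mem_lowerEdge, Set.mem_neg, not_forall, not_lt]
  constructor
  · rintro ⟨a, ha, hxa⟩
    exact ⟨-a, ha, neg_le_neg hxa⟩
  · rintro ⟨a, ha, hax⟩
    exact ⟨-a, by rwa [neg_neg], le_neg_of_le_neg hax⟩

lemma upperEdge_neg_eq_of_lowerEdge_eq {A B : Set G} (h : lowerEdge A = lowerEdge B) :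
    upperEdge (-A) = upperEdge (-B) :=
  SetLike.ext fun _ => by rw [mem_upperEdge_neg, mem_upperEdge_neg, h]

end NegEdges

section Balls
variable {F : Type*} [Field F] [LinearOrder F]

lemma IsBall.exists_mem {B : Set F} (hB : IsBall B) : ∃ a, a ∈ B := by
  obtain ⟨a, S, hS, rfl⟩ := hB
  exact ⟨a, by simpa [vball] using hS.1⟩

variable [IsStrictOrderedRing F]

namespace IsValFinalSegment

lemma sub_mem {S : Set F} (hS : IsValFinalSegment S) {x y : F} (hx : x ∈ S) (hy : y ∈ S) :
    x - y ∈ S := by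
  have hxy := abs_sub x y
  rcases le_total |x| |y| with h | h
  · exact hS.2 y hy _ ⟨2, by push_cast; linarith⟩
  · exact hS.2 x hx _ ⟨2, by push_cast; linarith⟩

lemma neg_mem {S : Set F} (hS : IsValFinalSegment S) {x : F} (hx : x ∈ S) : -x ∈ S := by
  simpa using hS.sub_mem hS.1 hx

end IsValFinalSegment

namespace IsBall

lemma neg {B : Set F} (hB : IsBall B) : IsBall (-B) := by
  obtain ⟨a, S, hS, rfl⟩ := hB
  refine ⟨-a, S, hS, Set.ext fun x => ⟨fun hx => ?_, fun hx => ?_⟩⟩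
  · simpa [vball, sub_eq_add_neg, add_comm] using hS.neg_mem hx
  · simpa [vball, sub_eq_add_neg, add_comm] using hS.neg_mem hx

lemma mem_of_abs_sub_le {B : Set F} (hB : IsBall B) {b c x : F} (hb : b ∈ B) (hc : c ∈ B)
    (h : |x - b| ≤ 2 * |c - b|) : x ∈ B := by
  obtain ⟨a, S, hS, rfl⟩ := hB
  have hcb : c - b ∈ S := by simpa using hS.sub_mem hb hc
  have hxb : x - b ∈ S := hS.2 _ hcb _ ⟨2, by exact_mod_cast h⟩
  simpa [vball] using hS.sub_mem hb hxb

lemma mem_of_le_of_mem_upperEdge {B : Set F} (hB : IsBall B) {b x : F} (hb : b ∈ B)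
    (hbx : b ≤ x) (hx : x ∈ upperEdge B) : x ∈ B := by
  obtain ⟨c, hc, hxc⟩ := hx
  refine hB.mem_of_abs_sub_le hb hc ?_
  rw [abs_of_nonneg (sub_nonneg.2 hbx), abs_of_nonneg (sub_nonneg.2 (hbx.trans hxc))]
  linarith

lemma subset_of_upperEdge_le {B₁ B₂ : Set F} (h₁ : IsBall B₁) (h₂ : IsBall B₂) {c : F}
    (hc₁ : c ∈ B₁) (hc₂ : c ∈ B₂) (h : upperEdge B₁ ≤ upperEdge B₂) : B₁ ⊆ B₂ := by
  intro x hx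
  have hreflect : c + |x - c| ∈ B₁ :=
    h₁.mem_of_abs_sub_le hc₁ hx <| by
      rw [add_sub_cancel_left, abs_abs]; linarith [abs_nonneg (x - c)]
  obtain ⟨b, hb, hle⟩ := h (mem_upperEdge_of_mem hreflect)
  exact h₂.mem_of_abs_sub_le hc₂ hb (by linarith [le_abs_self (b - c), abs_nonneg (b - c)])

lemma eq_of_upperEdge_eq {B₁ B₂ : Set F} (h₁ : IsBall B₁) (h₂ : IsBall B₂)
    (h : upperEdge B₁ = upperEdge B₂) : B₁ = B₂ := by
  obtain ⟨a₁, ha₁⟩ := h₁.exists_mem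
  obtain ⟨a₂, ha₂⟩ := h₂.exists_mem
  have hcommon : ∃ c, c ∈ B₁ ∧ c ∈ B₂ := by
    rcases le_total a₁ a₂ with ha | ha
    · exact ⟨a₂, h₁.mem_of_le_of_mem_upperEdge ha₁ ha (h ▸ mem_upperEdge_of_mem ha₂), ha₂⟩
    · exact ⟨a₁, ha₁, h₂.mem_of_le_of_mem_upperEdge ha₂ ha (h ▸ mem_upperEdge_of_mem ha₁)⟩
  obtain ⟨c, hc₁, hc₂⟩ := hcommon
  exact (h₁.subset_of_upperEdge_le h₂ hc₁ hc₂ h.le).antisymm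
    (h₂.subset_of_upperEdge_le h₁ hc₂ hc₁ h.ge)

lemma eq_of_lowerEdge_eq {B₁ B₂ : Set F} (h₁ : IsBall B₁) (h₂ : IsBall B₂)
    (h : lowerEdge B₁ = lowerEdge B₂) : B₁ = B₂ :=
  neg_inj.1 (h₁.neg.eq_of_upperEdge_eq h₂.neg (upperEdge_neg_eq_of_lowerEdge_eq h))

lemma upperEdge_ne_lowerEdge {B₁ B₂ : Set F} (h₁ : IsBall B₁) (h₂ : IsBall B₂) :
    upperEdge B₁ ≠ lowerEdge B₂ := by
  intro h
  obtain ⟨a₁, ha₁⟩ := h₁.exists_mem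
  obtain ⟨a₂, ha₂⟩ := h₂.exists_mem
  have below : ∀ x ∈ B₁, ∀ y ∈ B₂, x < y := fun x hx =>
    mem_lowerEdge.1 (h ▸ mem_upperEdge_of_mem hx)
  have ha : a₁ < a₂ := below a₁ ha₁ a₂ ha₂
  by_cases hmid : (a₁ + a₂) / 2 ∈ upperEdge B₁
  · obtain ⟨b, hb, hmb⟩ := hmid
    have ha₂B₁ : a₂ ∈ B₁ := h₁.mem_of_abs_sub_le ha₁ hb <| by
      rw [abs_of_pos (sub_pos.2 ha), abs_of_nonneg (by linarith)]; linarith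
    exact lt_irrefl a₂ (below a₂ ha₂B₁ a₂ ha₂)
  · rw [h] at hmid
    obtain ⟨b, hb, hbm⟩ := not_forall₂.1 hmid
    have ha₁B₂ : a₁ ∈ B₂ := h₂.mem_of_abs_sub_le ha₂ hb <| by
      rw [abs_of_neg (sub_neg.2 ha), abs_of_nonpos (by linarith)]; linarith
    exact lt_irrefl a₁ (below a₁ ha₁ a₁ ha₁B₂)

end IsBall

end Balls

/-- a ball is uniquely determined by its upper edge cut, and by its lower edge
cut; moreover the upper edge of a ball is never the lower edge of a ball. -/
theorem ball_determined_by_edges {F : Type*} [Field F] [LinearOrder F] [IsStrictOrderedRing F] (B1 B2 : Set F)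
    (h1 : IsBall B1) (h2 : IsBall B2) :
    (upperEdge B1 = upperEdge B2 → B1 = B2) ∧
    (lowerEdge B1 = lowerEdge B2 → B1 = B2) ∧
    upperEdge B1 ≠ lowerEdge B2 :=
  ⟨h1.eq_of_upperEdge_eq h2, h1.eq_of_lowerEdge_eq h2, h1.upperEdge_ne_lowerEdge h2⟩
end

section
/- Let $F|R$ be an extension of ordered fields with canonical valuation $v$, and let $D < E$ be nonempty subsets of $R$ forming either (i) a cut in $R$ (i.e., $D \cup E = R$) that is not a ball cut, with $\mathrm{Betw}_F(D,E) = \{c \in F : D < c < E\}$ nonempty, or (ii) a ball complement in $R$ (i.e., $D < B_0 < E$ and $R = D \cup B_0 \cup E$ for some ball $B_0$ in $R$). Then for every $a \in \mathrm{Betw}_F(D,E)$ one has $\mathrm{Betw}_F(D,E) = B_S(a,F)$, where $S$ is the largest final segment of $vF$ with $S > v(E-D)$. -/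
open Set

/-- The set of elements of `F` lying strictly between the subsets `D` and `E` of the
subfield `R`. -/
def Betw {F : Type*} [Field F] [LinearOrder F] [IsStrictOrderedRing F] (R : Subfield F) (D E : Set ↥R) : Set F :=
  {c : F | (∀ d ∈ D, (d : F) < c) ∧ ∀ e ∈ E, c < (e : F)}

/-!
Write `G` (`gapInfinitesimals D E`) for the set of `x ∈ F` with `n|x| < e - d` for all
`n : ℕ`, `d ∈ D`, `e ∈ E`, i.e. `v x > v(E - D)`. In both cases every gap `e - d` contains a
gap `e' - d'` at least `n + 1` times narrower: in a cut, walk from `d` to `e` in steps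
`(e - d)/(n + 1)`; for a ball complement around `c`, the points `c - (c - d)/(n + 1)` and
`c + (e - c)/(n + 1)` still lie outside the ball. As `Betw` sits inside every gap, its
diameter lies in `G`.

Conversely, no `p ∈ D ∪ E` is `G`-close to `a ∈ Betw`: in a cut, `D` would be an edge of the
`G`-ball around `p`; for a ball complement around `c`, with `x = |c - p|` the points `c ± x`
lie in `D` and `E` while `a` lies within `x/4` of `c`. So any `b` with `a - b ∈ G` stays
strictly between `D` and `E`.
-/

section FinalSegment
variable {K : Type*} [Field K] [LinearOrder K] [IsStrictOrderedRing K]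

lemma vle_trans {x y z : K} (hxy : vle x y) (hyz : vle y z) : vle x z := by
  obtain ⟨n, hn⟩ := hxy
  obtain ⟨m, hm⟩ := hyz
  refine ⟨m * n, ?_⟩
  calc |z| ≤ m * |y| := hm
    _ ≤ m * (n * |x|) := by gcongr
    _ = ((m * n : ℕ) : K) * |x| := by push_cast; ring

namespace IsValFinalSegment
variable {S : Set K}

omit [IsStrictOrderedRing K] in
lemma mem_of_abs_le (hS : IsValFinalSegment S) {x y : K} (hx : x ∈ S) (h : |y| ≤ |x|) :
    y ∈ S :=
  hS.2 x hx y ⟨1, by simpa using h⟩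

lemma div_natCast_notMem (hS : IsValFinalSegment S) {x : K} (hx : x ∉ S) {n : ℕ}
    (hn : n ≠ 0) : x / n ∉ S := fun h =>
  hx <| hS.2 _ h x
    ⟨n, by rw [abs_div, Nat.abs_cast, mul_div_cancel₀ _ (by exact_mod_cast hn)]⟩

omit [IsStrictOrderedRing K] in
lemma self_mem_vball (hS : IsValFinalSegment S) (c : K) : c ∈ vball S c := by
  simpa [vball] using hS.1

lemma preimage_val {F : Type*} [Field F] [LinearOrder F] [IsStrictOrderedRing F] {S : Set F}
    (hS : IsValFinalSegment S) (R : Subfield F) : IsValFinalSegment ((↑) ⁻¹' S : Set R) :=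
  ⟨by simpa using hS.1, fun x hx y ⟨n, hn⟩ => hS.2 _ hx _ ⟨n, by exact_mod_cast hn⟩⟩

end IsValFinalSegment

end FinalSegment

section Cut
variable {α : Type*} [LinearOrder α] {D E B : Set α}

lemma coe_upperEdge_eq (hDE : ∀ d ∈ D, ∀ e ∈ E, d < e) (hun : D ∪ E = univ)
    (hBD : B ⊆ D) (hcof : ∀ x ∈ D, ∃ b ∈ B, x ≤ b) : (upperEdge B : Set α) = D := by
  ext x
  refine ⟨fun ⟨b, hb, hxb⟩ => ?_, hcof x⟩
  rcases (hun ▸ mem_univ x : x ∈ D ∪ E) with hx | hx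
  · exact hx
  · exact absurd hxb (not_le.2 (hDE b (hBD hb) x hx))

lemma coe_lowerEdge_eq (hDE : ∀ d ∈ D, ∀ e ∈ E, d < e) (hun : D ∪ E = univ)
    (hBE : B ⊆ E) (hcoi : ∀ x ∈ E, ∃ b ∈ B, b ≤ x) : (lowerEdge B : Set α) = D := by
  ext x
  refine ⟨fun hx => ?_, fun hx b hb => hDE x hx b (hBE hb)⟩
  rcases (hun ▸ mem_univ x : x ∈ D ∪ E) with hxD | hxE
  · exact hxD
  · obtain ⟨b, hb, hbx⟩ := hcoi x hxE
    exact absurd (hx b hb) (not_lt.2 hbx)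

end Cut

section NarrowerGaps
variable {K : Type*} [Field K] [LinearOrder K] [IsStrictOrderedRing K] {D E : Set K}

def HasNarrowerGaps (D E : Set K) : Prop :=
  ∀ d ∈ D, ∀ e ∈ E, ∀ n : ℕ, ∃ d' ∈ D, ∃ e' ∈ E, (n + 1) * (e' - d') ≤ e - d

lemma hasNarrowerGaps_of_union_eq_univ (hDE : ∀ d ∈ D, ∀ e ∈ E, d < e)
    (hun : D ∪ E = univ) : HasNarrowerGaps D E := by
  intro d hd e he n
  set σ := (e - d) / (n + 1)
  have hstep : (n + 1) * σ = e - d := mul_div_cancel₀ _ (by positivity)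
  obtain ⟨k, hk, hk1⟩ : ∃ k : ℕ, d + k * σ ∈ D ∧ d + (k + 1) * σ ∉ D := by
    by_contra! h
    have hall : ∀ k : ℕ, d + k * σ ∈ D := fun k => by
      induction k with
      | zero => simpa using hd
      | succ k ih => exact_mod_cast h k ih
    have heD : e ∈ D := by simpa [hstep] using hall (n + 1)
    exact lt_irrefl e (hDE e heD e he)
  have hk1E : d + (k + 1) * σ ∈ E := (hun ▸ mem_univ _ : _ ∈ D ∪ E).resolve_left hk1
  exact ⟨_, hk, _, hk1E, le_of_eq (by rw [← hstep]; ring)⟩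

section BallComplement
variable {S : Set K} {c : K} (hS : IsValFinalSegment S)
  (hDB : ∀ d ∈ D, ∀ b ∈ vball S c, d < b) (hBE : ∀ b ∈ vball S c, ∀ e ∈ E, b < e)
  (hun : D ∪ vball S c ∪ E = univ)
include hS hDB hBE

lemma abs_sub_notMem_of_mem_union {p : K} (hp : p ∈ D ∪ E) : |c - p| ∉ S := fun h => by
  have hpB : p ∈ vball S c := hS.mem_of_abs_le h (abs_abs _).ge
  rcases hp with hp | hp
  · exact lt_irrefl p (hDB p hp p hpB)
  · exact lt_irrefl p (hBE p hpB p hp)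

include hun

lemma ballCompl_sub_mem_and_add_mem {x : K} (hx0 : 0 < x) (hxS : x ∉ S) :
    c - x ∈ D ∧ c + x ∈ E := by
  have hc := hS.self_mem_vball c
  have hsub : c - x ∉ vball S c := fun h => hxS (by simpa [vball] using h)
  have hadd : c + x ∉ vball S c := fun h => hxS (hS.mem_of_abs_le h (by simp))
  constructor
  · rcases (hun ▸ mem_univ (c - x) : c - x ∈ D ∪ vball S c ∪ E) with (h | h) | h
    · exact h
    · exact absurd h hsub
    · exact absurd (hBE c hc _ h) (by linarith)
  · rcases (hun ▸ mem_univ (c + x) : c + x ∈ D ∪ vball S c ∪ E) with (h | h) | h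
    · exact absurd (hDB _ h c hc) (by linarith)
    · exact absurd h hadd
    · exact h

lemma hasNarrowerGaps_of_ballCompl : HasNarrowerGaps D E := by
  intro d hd e he n
  have hc := hS.self_mem_vball c
  have hdc := hDB d hd c hc
  have hce := hBE c hc e he
  have hcd : c - d ∉ S := by
    simpa [abs_of_pos (sub_pos.2 hdc)] using abs_sub_notMem_of_mem_union hS hDB hBE (.inl hd)
  have hec : e - c ∉ S := by
    have := abs_sub_notMem_of_mem_union hS hDB hBE (.inr he)
    rwa [abs_sub_comm, abs_of_pos (sub_pos.2 hce)] at this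
  have hn : n + 1 ≠ 0 := n.succ_ne_zero
  obtain ⟨hd', -⟩ := ballCompl_sub_mem_and_add_mem hS hDB hBE hun (x := (c - d) / (n + 1 : ℕ))
    (div_pos (sub_pos.2 hdc) (by positivity)) (hS.div_natCast_notMem hcd hn)
  obtain ⟨-, he'⟩ := ballCompl_sub_mem_and_add_mem hS hDB hBE hun (x := (e - c) / (n + 1 : ℕ))
    (div_pos (sub_pos.2 hce) (by positivity)) (hS.div_natCast_notMem hec hn)
  refine ⟨_, hd', _, he', le_of_eq ?_⟩
  push_cast
  field_simp
  ring

end BallComplement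

end NarrowerGaps

section Betw
variable {F : Type*} [Field F] [LinearOrder F] [IsStrictOrderedRing F] {R : Subfield F}
  {D E : Set R}

def gapInfinitesimals (D E : Set R) : Set F :=
  {x | ∀ e ∈ E, ∀ d ∈ D, ∀ n : ℕ, n * |x| < (e : F) - d}

omit [IsStrictOrderedRing F] in
lemma sub_notMem_gapInfinitesimals {d e : R} (hd : d ∈ D) (he : e ∈ E) :
    (e : F) - d ∉ gapInfinitesimals D E := fun h => by
  simpa using (h e he d hd 1).trans_le (le_abs_self _)

lemma isValFinalSegment_gapInfinitesimals (hDE : ∀ d ∈ D, ∀ e ∈ E, d < e) :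
    IsValFinalSegment (gapInfinitesimals D E) := by
  refine ⟨fun e he d hd n => by simpa using hDE d hd e he,
    fun x hx y ⟨k, hk⟩ e he d hd n => ?_⟩
  calc (n : F) * |y| ≤ n * (k * |x|) := by gcongr
    _ = ((n * k : ℕ) : F) * |x| := by push_cast; ring
    _ < e - d := hx e he d hd (n * k)

lemma setOf_vlt_eq_gapInfinitesimals (hDE : ∀ d ∈ D, ∀ e ∈ E, d < e) :
    {x : F | x = 0 ∨ ∀ e ∈ E, ∀ d ∈ D, vlt ((e : F) - (d : F)) x} =
      gapInfinitesimals D E := by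
  ext x
  have hgap : ∀ e ∈ E, ∀ d ∈ D, |(e : F) - d| = e - d := fun e he d hd =>
    abs_of_pos (sub_pos.2 (by exact_mod_cast hDE d hd e he))
  constructor
  · rintro (rfl | hx)
    · exact (isValFinalSegment_gapInfinitesimals hDE).1
    · intro e he d hd n
      have := not_exists.1 (hx e he d hd).2 n
      rwa [not_le, hgap e he d hd] at this
  · intro hx
    refine or_iff_not_imp_left.2 fun _ e he d hd => ⟨⟨1, ?_⟩, fun ⟨n, hn⟩ => ?_⟩
    · simpa [hgap e he d hd] using (hx e he d hd 1).le
    · exact (hn.trans_lt (by simpa [hgap e he d hd] using hx e he d hd n)).false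

lemma sub_mem_gapInfinitesimals_of_mem_betw (hnarrow : HasNarrowerGaps D E) {a b : F}
    (ha : a ∈ Betw R D E) (hb : b ∈ Betw R D E) : a - b ∈ gapInfinitesimals D E := by
  intro e he d hd n
  obtain ⟨d', hd', e', he', hle⟩ := hnarrow d hd e he n
  have hle' : ((n : F) + 1) * ((e' : F) - d') ≤ e - d := by exact_mod_cast hle
  have hab : |a - b| < (e' : F) - d' := abs_sub_lt_iff.2
    ⟨by linarith [ha.2 e' he', hb.1 d' hd'], by linarith [hb.2 e' he', ha.1 d' hd']⟩
  calc (n : F) * |a - b| ≤ n * (e' - d') := by gcongr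
    _ < (n + 1) * (e' - d') := by linarith [abs_nonneg (a - b)]
    _ ≤ e - d := hle'

lemma vball_subset_betw {S : Set F} (hS : IsValFinalSegment S) {a : F} (ha : a ∈ Betw R D E)
    (hfar : ∀ p ∈ D ∪ E, a - p ∉ S) : vball S a ⊆ Betw R D E := by
  intro b hb
  refine ⟨fun d hd => ?_, fun e he => ?_⟩
  · by_contra! hbd
    have had := ha.1 d hd
    exact hfar d (.inl hd)
      (hS.mem_of_abs_le hb (abs_le_abs_of_nonneg (by linarith) (by linarith)))
  · by_contra! heb
    have hae := ha.2 e he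
    exact hfar e (.inr he)
      (hS.mem_of_abs_le hb (abs_le_abs_of_nonpos (by linarith) (by linarith)))

section NonBallCut
variable (hDE : ∀ d ∈ D, ∀ e ∈ E, d < e) (hun : D ∪ E = univ) {a : F}
  (ha : a ∈ Betw R D E) {p : R}
include hDE hun ha

lemma eq_upperEdge_of_sub_mem (hp : p ∈ D) (hap : a - p ∈ gapInfinitesimals D E) :
    D = (upperEdge (vball ((↑) ⁻¹' gapInfinitesimals D E) p) : Set R) := by
  have hG := isValFinalSegment_gapInfinitesimals hDE
  refine (coe_upperEdge_eq hDE hun (fun y hy => ?_) fun x hx => ?_).symm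
  · refine (hun ▸ mem_univ y : y ∈ D ∪ E).resolve_right fun hyE => ?_
    exact sub_notMem_gapInfinitesimals hp hyE
      (hG.mem_of_abs_le hy (by push_cast; rw [abs_sub_comm]))
  · rcases le_or_gt x p with hxp | hpx
    · exact ⟨p, (hG.preimage_val R).self_mem_vball p, hxp⟩
    · have hpx' : (p : F) < x := by exact_mod_cast hpx
      have hxa := ha.1 x hx
      exact ⟨x, hG.mem_of_abs_le hap (abs_le_abs (by push_cast; linarith)
        (by push_cast; linarith)), le_rfl⟩

lemma eq_lowerEdge_of_sub_mem (hp : p ∈ E) (hap : a - p ∈ gapInfinitesimals D E) :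
    D = (lowerEdge (vball ((↑) ⁻¹' gapInfinitesimals D E) p) : Set R) := by
  have hG := isValFinalSegment_gapInfinitesimals hDE
  refine (coe_lowerEdge_eq hDE hun (fun y hy => ?_) fun x hx => ?_).symm
  · refine (hun ▸ mem_univ y : y ∈ D ∪ E).resolve_left fun hyD => ?_
    exact sub_notMem_gapInfinitesimals hyD hp (by simpa using (hy : ((p - y : R) : F) ∈ _))
  · rcases le_or_gt p x with hpx | hxp
    · exact ⟨p, (hG.preimage_val R).self_mem_vball p, hpx⟩
    · have hxp' : (x : F) < p := by exact_mod_cast hxp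
      have hax := ha.2 x hx
      refine ⟨x, hG.mem_of_abs_le hap ?_, le_rfl⟩
      rw [abs_sub_comm a]
      exact abs_le_abs (by push_cast; linarith) (by push_cast; linarith)

lemma sub_notMem_gapInfinitesimals_of_nonBallCut
    (hnb : ∀ B : Set R, IsBall B →
      D ≠ ((upperEdge B : LowerSet R) : Set R) ∧ D ≠ ((lowerEdge B : LowerSet R) : Set R))
    (hp : p ∈ D ∪ E) : a - p ∉ gapInfinitesimals D E := fun hap => by
  have hball : IsBall (vball ((↑) ⁻¹' gapInfinitesimals D E : Set R) p) :=
    ⟨p, _, (isValFinalSegment_gapInfinitesimals hDE).preimage_val R, rfl⟩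
  rcases hp with hp | hp
  · exact (hnb _ hball).1 (eq_upperEdge_of_sub_mem hDE hun ha hp hap)
  · exact (hnb _ hball).2 (eq_lowerEdge_of_sub_mem hDE hun ha hp hap)

end NonBallCut

lemma sub_notMem_gapInfinitesimals_of_ballCompl {c : R} {S : Set R} (hS : IsValFinalSegment S)
    (hDB : ∀ d ∈ D, ∀ b ∈ vball S c, d < b) (hBE : ∀ b ∈ vball S c, ∀ e ∈ E, b < e)
    (hun : D ∪ vball S c ∪ E = univ) {a : F} (ha : a ∈ Betw R D E) {p : R}
    (hp : p ∈ D ∪ E) : a - p ∉ gapInfinitesimals D E := fun hap => by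
  have hxS := abs_sub_notMem_of_mem_union hS hDB hBE hp
  have hx0 : 0 < |c - p| := (abs_nonneg _).lt_of_ne fun h => hxS (h ▸ hS.1)
  obtain ⟨hl, hr⟩ := ballCompl_sub_mem_and_add_mem hS hDB hBE hun hx0 hxS
  obtain ⟨hl4, hr4⟩ := ballCompl_sub_mem_and_add_mem hS hDB hBE hun (x := |c - p| / 4)
    (by positivity) (by simpa using hS.div_natCast_notMem hxS (n := 4) (by norm_num))
  have hwide := hap _ hr _ hl 4
  have hlo := ha.1 _ hl4
  have hhi := ha.2 _ hr4
  have hx : ((|c - p| : R) : F) = |(c : F) - p| := rfl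
  have h4 : ((4 : R) : F) = 4 := rfl
  push_cast [hx, h4] at hwide hlo hhi
  have hca : |(c : F) - a| < |(c : F) - p| / 4 := abs_sub_lt_iff.2 ⟨by linarith, by linarith⟩
  linarith [abs_sub_le (c : F) a p, abs_nonneg ((c : F) - a)]

end Betw

theorem betw_eq_ball_general {F : Type*} [Field F] [LinearOrder F] [IsStrictOrderedRing F] (R : Subfield F) (D E : Set ↥R)
    (hDE : ∀ d ∈ D, ∀ e ∈ E, d < e)
    (hcase :
      (D ∪ E = Set.univ ∧
        (∀ B : Set ↥R, IsBall B →
          D ≠ ((upperEdge B : LowerSet ↥R) : Set ↥R) ∧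
          D ≠ ((lowerEdge B : LowerSet ↥R) : Set ↥R)) ∧
        (Betw R D E).Nonempty) ∨
      (∃ B0 : Set ↥R, IsBall B0 ∧ (∀ d ∈ D, ∀ b ∈ B0, d < b) ∧
        (∀ b ∈ B0, ∀ e ∈ E, b < e) ∧ D ∪ B0 ∪ E = Set.univ)) :
    IsValFinalSegment {x : F | x = 0 ∨ ∀ e ∈ E, ∀ d ∈ D, vlt ((e : F) - (d : F)) x} ∧
    ∀ a ∈ Betw R D E,
      Betw R D E =
        vball {x : F | x = 0 ∨ ∀ e ∈ E, ∀ d ∈ D, vlt ((e : F) - (d : F)) x} a := by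
  rw [setOf_vlt_eq_gapInfinitesimals hDE]
  have hG := isValFinalSegment_gapInfinitesimals hDE
  refine ⟨hG, fun a ha => ?_⟩
  obtain ⟨hnarrow, hfar⟩ :
      HasNarrowerGaps D E ∧ ∀ p ∈ D ∪ E, a - p ∉ gapInfinitesimals D E := by
    rcases hcase with ⟨hun, hnb, -⟩ | ⟨-, ⟨c, S, hS, rfl⟩, hDB, hBE, hun⟩
    · exact ⟨hasNarrowerGaps_of_union_eq_univ hDE hun,
        fun p => sub_notMem_gapInfinitesimals_of_nonBallCut hDE hun ha hnb⟩
    · exact ⟨hasNarrowerGaps_of_ballCompl hS hDB hBE hun,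
        fun p => sub_notMem_gapInfinitesimals_of_ballCompl hS hDB hBE hun ha⟩
  exact Subset.antisymm (fun b hb => sub_mem_gapInfinitesimals_of_mem_betw hnarrow ha hb)
    (vball_subset_betw hG ha hfar)

/-- take nonempty `D < E` in `R` forming either (i) a non-ball cut in `R`
that is filled in `F`, or (ii) a ball complement in `R`.  Then for every
`a ∈ Betw_F(D,E)` one has `Betw_F(D,E) = B_S(a,F)`, where `S` is the largest final
segment of `vF` with `S > v(E-D)`, namely (together with `∞`, encoded by `0`)
`S = {x ≠ 0 | ∀ e ∈ E, d ∈ D, v(e-d) < v x}`; in particular this `S` is a final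
segment. -/
theorem betw_eq_ball {F : Type*} [Field F] [LinearOrder F] [IsStrictOrderedRing F] (R : Subfield F) (D E : Set ↥R)
    (hD : D.Nonempty) (hE : E.Nonempty) (hDE : ∀ d ∈ D, ∀ e ∈ E, d < e)
    (hcase :
      (D ∪ E = Set.univ ∧
        (∀ B : Set ↥R, IsBall B →
          D ≠ ((upperEdge B : LowerSet ↥R) : Set ↥R) ∧
          D ≠ ((lowerEdge B : LowerSet ↥R) : Set ↥R)) ∧
        (Betw R D E).Nonempty) ∨
      (∃ B0 : Set ↥R, IsBall B0 ∧ (∀ d ∈ D, ∀ b ∈ B0, d < b) ∧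
        (∀ b ∈ B0, ∀ e ∈ E, b < e) ∧ D ∪ B0 ∪ E = Set.univ)) :
    IsValFinalSegment {x : F | x = 0 ∨ ∀ e ∈ E, ∀ d ∈ D, vlt ((e : F) - (d : F)) x} ∧
    ∀ a ∈ Betw R D E,
      Betw R D E =
        vball {x : F | x = 0 ∨ ∀ e ∈ E, ∀ d ∈ D, vlt ((e : F) - (d : F)) x} a :=
  betw_eq_ball_general R D E hDE hcase
end
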